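/- Let h ∈ E_σ and l ∈ ℝ such that h(x) = O(|x|^l) as |x| → ∞ on ℝ \ (−1,1). Then f̃_h(x) = O(|x|^{l−1}). -/

import Mathlib

/-! For `0 < x ≤ t` with `x² ≥ 2σ²|l - 1|`, the bound `log (t / x) ≤ (t - x) / x` gives
`(t / x)^(l-1) ≤ exp ((t² - x²) / (4σ²))`, so half of the Gaussian decay pays for the
polynomial growth: `t^l φ_σ(t) ≤ x^(l-1) φ_σ(x) · t exp (-(t² - x²) / (4σ²))`.
The last factor integrates over `(x, ∞)` to `2σ²`, whence `|f̃_h(x)| ≤ 2C x^(l-1)`.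
The case `x < 0` is the case `x > 0` for `t ↦ h (-t)`. -/

open MeasureTheory

/-- Density of `N(0,σ²)`. -/
noncomputable def gaussDens (σ x : ℝ) : ℝ :=
  (1 / (σ * Real.sqrt (2 * Real.pi))) * Real.exp (-x ^ 2 / (2 * σ ^ 2))

/-- `h ∈ E_σ`: Borel functions on `ℝ \ (−1,1)` integrable against `P·φ_σ` for
every polynomial `P`. -/
def memEsig (σ : ℝ) (h : ℝ → ℝ) : Prop :=
  Measurable h ∧ ∀ P : Polynomial ℝ,
    IntegrableOn (fun x => |h x * P.eval x| * gaussDens σ x) {x : ℝ | 1 ≤ |x|}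

/-- The solution `f̃_h` of the modified Stein equation:
`f̃_h(x) = (1/(σ²φ_σ(x))) ∫_x^∞ h φ_σ` for `x ≥ 1` and
`f̃_h(x) = (1/(σ²φ_σ(x))) ∫_{−∞}^x h φ_σ` for `x ≤ −1`. -/
noncomputable def tildeF (σ : ℝ) (h : ℝ → ℝ) (x : ℝ) : ℝ :=
  if 0 ≤ x then (1 / (σ ^ 2 * gaussDens σ x)) * ∫ t in Set.Ioi x, h t * gaussDens σ t
  else (1 / (σ ^ 2 * gaussDens σ x)) * ∫ t in Set.Iio x, h t * gaussDens σ t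

open Real Set Filter Topology

lemma gaussDens_pos {σ : ℝ} (hσ : 0 < σ) (x : ℝ) : 0 < gaussDens σ x := by
  unfold gaussDens
  have := pi_pos
  positivity

lemma gaussDens_neg (σ x : ℝ) : gaussDens σ (-x) = gaussDens σ x := by
  simp [gaussDens]

lemma gaussDens_eq_mul_exp (σ x t : ℝ) :
    gaussDens σ t = gaussDens σ x * exp (-(t ^ 2 - x ^ 2) / (2 * σ ^ 2)) := by
  unfold gaussDens
  rw [mul_assoc, ← exp_add]
  congr 2
  ring

lemma integral_Ioi_mul_exp_neg_mul_sq {b : ℝ} (hb : 0 < b) (c : ℝ) :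
    ∫ t in Ioi c, t * exp (-b * t ^ 2) = exp (-b * c ^ 2) / (2 * b) := by
  have hderiv : ∀ t ∈ Ici c, HasDerivAt (fun u => -exp (-b * u ^ 2) / (2 * b))
      (t * exp (-b * t ^ 2)) t := by
    intro t _
    refine ((((hasDerivAt_pow 2 t).const_mul (-b)).exp).neg.div_const (2 * b)).congr_deriv ?_
    field_simp
    ring
  have hlim : Tendsto (fun u => -exp (-b * u ^ 2) / (2 * b)) atTop (𝓝 0) := by
    have : Tendsto (fun u : ℝ => -b * u ^ 2) atTop atBot :=
      (tendsto_pow_atTop two_ne_zero).const_mul_atTop_of_neg (neg_lt_zero.2 hb)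
    simpa using ((tendsto_exp_atBot.comp this).neg.div_const (2 * b))
  rw [integral_Ioi_of_hasDerivAt_of_tendsto' hderiv
    (integrable_mul_exp_neg_mul_sq hb).integrableOn hlim]
  ring

lemma rpow_div_le_exp_mul_sq_sub {a m x t : ℝ} (hx : 0 < x) (hxt : x ≤ t)
    (hm : |m| ≤ 2 * a * x ^ 2) : (t / x) ^ m ≤ exp (a * (t ^ 2 - x ^ 2)) := by
  have htx : 0 < t / x := div_pos (hx.trans_le hxt) hx
  have hlog_nonneg : 0 ≤ log (t / x) := log_nonneg ((one_le_div hx).2 hxt)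
  have hlog_le : log (t / x) ≤ (t - x) / x := by
    have := log_le_sub_one_of_pos htx
    rwa [div_sub_one hx.ne'] at this
  rw [rpow_def_of_pos htx, exp_le_exp]
  calc log (t / x) * m ≤ log (t / x) * |m| :=
        mul_le_mul_of_nonneg_left (le_abs_self m) hlog_nonneg
    _ ≤ (t - x) / x * (2 * a * x ^ 2) :=
        mul_le_mul hlog_le hm (abs_nonneg m) (div_nonneg (sub_nonneg.2 hxt) hx.le)
    _ = 2 * a * x * (t - x) := by field_simp
    _ ≤ a * (t ^ 2 - x ^ 2) := by
        have ha : 0 ≤ 2 * a := nonneg_of_mul_nonneg_left ((abs_nonneg m).trans hm) (by positivity)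
        nlinarith [mul_nonneg (mul_nonneg ha (sub_nonneg.2 hxt)) (sub_nonneg.2 hxt)]

lemma rpow_mul_gaussDens_le {σ l x t : ℝ} (hσ : 0 < σ) (hx : 0 < x) (hxt : x ≤ t)
    (hx2 : 2 * σ ^ 2 * |l - 1| ≤ x ^ 2) :
    t ^ l * gaussDens σ t ≤
      x ^ (l - 1) * gaussDens σ x * exp ((4 * σ ^ 2)⁻¹ * x ^ 2) *
        (t * exp (-(4 * σ ^ 2)⁻¹ * t ^ 2)) := by
  have ht : 0 < t := hx.trans_le hxt
  have hpow : (t / x) ^ (l - 1) ≤ exp ((4 * σ ^ 2)⁻¹ * (t ^ 2 - x ^ 2)) :=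
    rpow_div_le_exp_mul_sq_sub hx hxt (by field_simp; linarith)
  have hexp : exp ((4 * σ ^ 2)⁻¹ * (t ^ 2 - x ^ 2)) * exp (-(t ^ 2 - x ^ 2) / (2 * σ ^ 2)) =
      exp ((4 * σ ^ 2)⁻¹ * x ^ 2) * exp (-(4 * σ ^ 2)⁻¹ * t ^ 2) := by
    rw [← exp_add, ← exp_add]
    congr 1
    field_simp
    ring
  have hsplit : t ^ l = x ^ (l - 1) * (t / x) ^ (l - 1) * t := by
    rw [div_rpow ht.le hx.le, rpow_sub_one ht.ne']
    field_simp
  have hφx := gaussDens_pos hσ x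
  calc t ^ l * gaussDens σ t
      = x ^ (l - 1) * (t / x) ^ (l - 1) * t *
          (gaussDens σ x * exp (-(t ^ 2 - x ^ 2) / (2 * σ ^ 2))) := by
        rw [hsplit, ← gaussDens_eq_mul_exp]
    _ ≤ x ^ (l - 1) * exp ((4 * σ ^ 2)⁻¹ * (t ^ 2 - x ^ 2)) * t *
          (gaussDens σ x * exp (-(t ^ 2 - x ^ 2) / (2 * σ ^ 2))) := by gcongr
    _ = _ := by linear_combination (x ^ (l - 1) * t * gaussDens σ x) * hexp

lemma abs_setIntegral_Ioi_mul_gaussDens_le {σ l C x : ℝ} {H : ℝ → ℝ} (hσ : 0 < σ)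
    (hx : 0 < x) (hx2 : 2 * σ ^ 2 * |l - 1| ≤ x ^ 2)
    (hH : ∀ t, x ≤ t → |H t| ≤ C * t ^ l) :
    |∫ t in Ioi x, H t * gaussDens σ t| ≤ 2 * σ ^ 2 * C * x ^ (l - 1) * gaussDens σ x := by
  have hC : 0 ≤ C :=
    nonneg_of_mul_nonneg_left ((abs_nonneg _).trans (hH x le_rfl)) (rpow_pos_of_pos hx l)
  set b : ℝ := (4 * σ ^ 2)⁻¹
  have hb : 0 < b := by positivity
  set K := C * (x ^ (l - 1) * gaussDens σ x * exp (b * x ^ 2))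
  have hdom : ∀ᵐ t ∂volume.restrict (Ioi x),
      ‖H t * gaussDens σ t‖ ≤ K * (t * exp (-b * t ^ 2)) := by
    refine (ae_restrict_iff' measurableSet_Ioi).2 (Eventually.of_forall fun t ht => ?_)
    rw [Real.norm_eq_abs, abs_mul, abs_of_pos (gaussDens_pos hσ t), mul_assoc]
    calc |H t| * gaussDens σ t ≤ C * t ^ l * gaussDens σ t :=
          mul_le_mul_of_nonneg_right (hH t (le_of_lt ht)) (gaussDens_pos hσ t).le
      _ ≤ C * (x ^ (l - 1) * gaussDens σ x * exp (b * x ^ 2) * (t * exp (-b * t ^ 2))) := by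
          rw [mul_assoc]
          exact mul_le_mul_of_nonneg_left (rpow_mul_gaussDens_le hσ hx (le_of_lt ht) hx2) hC
  calc |∫ t in Ioi x, H t * gaussDens σ t|
      ≤ ∫ t in Ioi x, K * (t * exp (-b * t ^ 2)) :=
        norm_integral_le_of_norm_le
          ((integrable_mul_exp_neg_mul_sq hb).integrableOn.const_mul K) hdom
    _ = K * (exp (-b * x ^ 2) / (2 * b)) := by
        rw [integral_const_mul, integral_Ioi_mul_exp_neg_mul_sq hb]
    _ = 2 * σ ^ 2 * C * x ^ (l - 1) * gaussDens σ x := by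
        simp only [K, b]
        rw [neg_mul, exp_neg]
        field_simp
        ring

lemma tildeF_of_neg (σ : ℝ) (h : ℝ → ℝ) {x : ℝ} (hx : x < 0) :
    tildeF σ h x = tildeF σ (fun t => h (-t)) (-x) := by
  have hIio :
      ∫ t in Iio x, h t * gaussDens σ t = ∫ t in Ioi (-x), h (-t) * gaussDens σ t := by
    rw [← integral_Iic_eq_integral_Iio, ← integral_comp_neg_Iic]
    simp only [neg_neg, gaussDens_neg]
  rw [tildeF, tildeF, if_neg hx.not_ge, if_pos (neg_nonneg.2 hx.le), gaussDens_neg, hIio]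

lemma abs_tildeF_le {σ l C x : ℝ} {h : ℝ → ℝ} (hσ : 0 < σ) (hx : 0 < x)
    (hx2 : 2 * σ ^ 2 * |l - 1| ≤ x ^ 2) (hh : ∀ t, x ≤ t → |h t| ≤ C * t ^ l) :
    |tildeF σ h x| ≤ 2 * C * x ^ (l - 1) := by
  have hφx := gaussDens_pos hσ x
  rw [tildeF, if_pos hx.le, abs_mul, abs_of_pos (by positivity), one_div,
    inv_mul_le_iff₀ (by positivity)]
  exact (abs_setIntegral_Ioi_mul_gaussDens_le hσ hx hx2 hh).trans_eq (by ring)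

theorem stmt_18_general (σ : ℝ) (hσ : 0 < σ) (h : ℝ → ℝ) (l : ℝ)
    (hO : ∃ C R : ℝ, 1 ≤ R ∧ ∀ x : ℝ, R ≤ |x| → |h x| ≤ C * |x| ^ l) :
    ∃ C R : ℝ, 1 ≤ R ∧ ∀ x : ℝ, R ≤ |x| → |tildeF σ h x| ≤ C * |x| ^ (l - 1) := by
  obtain ⟨C, R, hR, hC⟩ := hO
  set R' := max R (1 + 2 * σ ^ 2 * |l - 1|)
  have hRR' : R ≤ R' := le_max_left _ _
  have hR'_sq : ∀ y, R' ≤ y → 2 * σ ^ 2 * |l - 1| ≤ y ^ 2 := fun y hy => by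
    have := le_max_right R (1 + 2 * σ ^ 2 * |l - 1|)
    nlinarith [abs_nonneg (l - 1)]
  refine ⟨2 * C, R', hR.trans hRR', fun x hx => ?_⟩
  rcases le_or_gt 0 x with hx0 | hx0
  · rw [abs_of_nonneg hx0] at hx ⊢
    refine abs_tildeF_le hσ (by linarith) (hR'_sq x hx) fun t ht => ?_
    have ht0 : 0 ≤ t := hx0.trans ht
    simpa [abs_of_nonneg ht0] using hC t (by rw [abs_of_nonneg ht0]; linarith)
  · rw [abs_of_neg hx0] at hx ⊢
    rw [tildeF_of_neg σ h hx0]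
    refine abs_tildeF_le hσ (by linarith) (hR'_sq _ hx) fun t ht => ?_
    have ht0 : 0 ≤ t := by linarith
    simpa [abs_of_nonneg ht0] using hC (-t) (by rw [abs_neg, abs_of_nonneg ht0]; linarith)

/-- If `h ∈ E_σ` and `h(x) = O(|x|^l)` as `|x| → ∞` on `ℝ \ (−1,1)`, then
`f̃_h(x) = O(|x|^{l−1})`. -/
theorem stmt_18 (σ : ℝ) (hσ : 0 < σ) (h : ℝ → ℝ) (hh : memEsig σ h) (l : ℝ)
    (hO : ∃ C R : ℝ, 1 ≤ R ∧ ∀ x : ℝ, R ≤ |x| → |h x| ≤ C * |x| ^ l) :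
    ∃ C R : ℝ, 1 ≤ R ∧ ∀ x : ℝ, R ≤ |x| → |tildeF σ h x| ≤ C * |x| ^ (l - 1) :=
  stmt_18_general σ hσ h l hO
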